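/- arXiv:math/0601197 — 3 statements merged into one kernel-verified Lean document; each statement's English description precedes it below -/
import Mathlib

section
/- Let f : Y → X be a continuous, open, surjective map of topological spaces such that every fiber f⁻¹({x}) is an irreducible subspace of Y. Then for any subset S ⊆ X, S is irreducible if and only if f⁻¹(S) is irreducible. -/
/-- Let `f : Y → X` be a continuous, open, surjective map of topological spaces all of whose
fibers are irreducible. Then for any `S ⊆ X`, `S` is irreducible iff `f⁻¹(S)` is irreducible. -/
theorem irreducible_iff_preimage_irreducible {Y X : Type*} [TopologicalSpace Y]
    [TopologicalSpace X] (f : Y → X) (hcont : Continuous f) (hopen : IsOpenMap f)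
    (hsurj : Function.Surjective f) (hfib : ∀ x : X, IsIrreducible (f ⁻¹' {x}))
    (S : Set X) :
    IsIrreducible S ↔ IsIrreducible (f ⁻¹' S) := by
  constructor
  · rintro ⟨⟨x, hxS⟩, hpre⟩
    obtain ⟨y, hy⟩ := hsurj x
    refine ⟨⟨y, by simpa [hy] using hxS⟩, ?_⟩
    intro U V hU hV ⟨yU, hyUS, hyU⟩ ⟨yV, hyVS, hyV⟩
    -- f(U), f(V) are open and meet S
    obtain ⟨x₀, hx₀S, hx₀U, hx₀V⟩ := hpre (f '' U) (f '' V) (hopen U hU) (hopen V hV)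
      ⟨f yU, hyUS, ⟨yU, hyU, rfl⟩⟩ ⟨f yV, hyVS, ⟨yV, hyV, rfl⟩⟩
    obtain ⟨uU, huU, huUfx⟩ := hx₀U
    obtain ⟨uV, huV, huVfx⟩ := hx₀V
    -- the fiber over x₀ meets U and V, hence U ∩ V
    obtain ⟨z, hz, hzU, hzV⟩ := (hfib x₀).2 U V hU hV
      ⟨uU, by simp [huUfx], huU⟩ ⟨uV, by simp [huVfx], huV⟩
    exact ⟨z, by simpa using hz ▸ hx₀S, hzU, hzV⟩
  · intro h
    have : S = f '' (f ⁻¹' S) := (Set.image_preimage_eq S hsurj).symm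
    rw [this]
    exact h.image f hcont.continuousOn
end

section
/- Let L and L′ be free O-modules of finite rank over O = k[[ε]], let φ : L → L′ be an O-linear map, and let V ⊆ L, V′ ⊆ L′ be k-linear subspaces with εᴺL ⊆ V and εᴺL′ ⊆ V′ for some positive integer N. If φ(V) + εᴹL′ = V′ for all M ≥ N, then φ(V) = V′. -/
open PowerSeries Pointwise

/-- Universe-polymorphic version of the Krull intersection theorem for modules:
if `x ∈ P ⊔ I^i • ⊤` for all `i`, then `x ∈ P`. -/
lemma aux_krull_sep {R : Type*} [CommRing R] [IsNoetherianRing R] [IsLocalRing R]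
    (I : Ideal R) (hI : I ≠ ⊤) {M : Type*} [AddCommGroup M] [Module R M] [Module.Finite R M]
    (P : Submodule R M) (x : M) (hx : ∀ i : ℕ, x ∈ P ⊔ (I ^ i • ⊤ : Submodule R M)) :
    x ∈ P := by
  obtain ⟨n, π, hπ⟩ := Module.Finite.exists_fin' R M
  set Q : Submodule R (Fin n → R) := Submodule.comap π P with hQ
  have hker : LinearMap.ker π ≤ Q := fun y hy => by
    simp only [hQ, Submodule.mem_comap]
    rw [LinearMap.mem_ker] at hy
    rw [hy]; exact P.zero_mem
  obtain ⟨y, rfl⟩ := hπ x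
  have hy : ∀ i : ℕ, y ∈ Q ⊔ (I ^ i • ⊤ : Submodule R (Fin n → R)) := by
    intro i
    have hmapsup : Submodule.map π (Q ⊔ (I ^ i • ⊤ : Submodule R (Fin n → R))) =
        P ⊔ (I ^ i • ⊤ : Submodule R M) := by
      rw [Submodule.map_sup, Submodule.map_smul'', Submodule.map_top,
        LinearMap.range_eq_top.mpr hπ, Submodule.map_comap_eq,
        LinearMap.range_eq_top.mpr hπ, top_inf_eq]
    have : y ∈ Submodule.comap π (P ⊔ (I ^ i • ⊤ : Submodule R M)) := hx i
    rw [← hmapsup, Submodule.comap_map_eq] at this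
    exact sup_le le_rfl (hker.trans le_sup_left) this
  -- pass to the quotient (Fin n → R) ⧸ Q, same universe as R
  have hbot : (⨅ i : ℕ, I ^ i • ⊤ : Submodule R ((Fin n → R) ⧸ Q)) = ⊥ :=
    Ideal.iInf_pow_smul_eq_bot_of_isLocalRing I hI
  have hmem : Q.mkQ y ∈ (⨅ i : ℕ, I ^ i • ⊤ : Submodule R ((Fin n → R) ⧸ Q)) := by
    rw [Submodule.mem_iInf]
    intro i
    have := hy i
    have h2 : Q.mkQ y ∈ Submodule.map Q.mkQ (Q ⊔ (I ^ i • ⊤ : Submodule R (Fin n → R))) :=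
      Submodule.mem_map_of_mem this
    have hQbot : Submodule.map Q.mkQ Q = ⊥ := by
      rw [eq_bot_iff]
      rintro z ⟨w, hw, rfl⟩
      simpa [Submodule.Quotient.mk_eq_zero] using hw
    rwa [Submodule.map_sup, hQbot, Submodule.map_smul'',
      Submodule.map_top, Submodule.range_mkQ, bot_sup_eq] at h2
  rw [hbot, Submodule.mem_bot, Submodule.mkQ_apply, Submodule.Quotient.mk_eq_zero] at hmem
  exact hmem

/-- Universe-polymorphic consequence of the Artin–Rees lemma. -/
lemma aux_artin_rees {R : Type*} [CommRing R] [IsNoetherianRing R] (I : Ideal R)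
    {M : Type*} [AddCommGroup M] [Module R M] [Module.Finite R M] (P : Submodule R M) :
    ∃ c : ℕ, ∀ m : ℕ, c ≤ m →
      ((I ^ m • ⊤ : Submodule R M) ⊓ P) ≤ I ^ (m - c) • P := by
  obtain ⟨n, π, hπ⟩ := Module.Finite.exists_fin' R M
  set Q : Submodule R (Fin n → R) := Submodule.comap π P with hQ
  obtain ⟨c, hc⟩ := Ideal.exists_pow_inf_eq_pow_smul I Q
  refine ⟨c, fun m hm x hx => ?_⟩
  obtain ⟨hx1, hx2⟩ := hx
  have hmap : (I ^ m • ⊤ : Submodule R M) = Submodule.map π (I ^ m • ⊤) := by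
    rw [Submodule.map_smul'', Submodule.map_top, LinearMap.range_eq_top.mpr hπ]
  rw [hmap] at hx1
  obtain ⟨y, hy, rfl⟩ := hx1
  have hyQ : y ∈ Q := hx2
  have : y ∈ (I ^ m • ⊤ : Submodule R (Fin n → R)) ⊓ Q := ⟨hy, hyQ⟩
  rw [hc m hm] at this
  have h2 : y ∈ (I ^ (m - c) • Q : Submodule R (Fin n → R)) :=
    Submodule.smul_mono le_rfl inf_le_right this
  have h3 : π y ∈ Submodule.map π (I ^ (m - c) • Q) := Submodule.mem_map_of_mem h2
  rwa [Submodule.map_smul'', Submodule.map_comap_eq, LinearMap.range_eq_top.mpr hπ,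
    top_inf_eq] at h3

/-- Let `L, L′` be free `O`-modules of finite rank over `O = k[[ε]]`, `φ : L → L′` an
`O`-linear map, and `V ⊆ L`, `V′ ⊆ L′` `k`-linear subspaces with `εᴺL ⊆ V` and `εᴺL′ ⊆ V′`.
If `φ(V) + εᴹL′ = V′` for all `M ≥ N`, then `φ(V) = V′`. -/
theorem image_eq_of_image_add_eps_pow_eq {k : Type*} [Field k]
    {L L' : Type*} [AddCommGroup L] [AddCommGroup L']
    [Module (PowerSeries k) L] [Module (PowerSeries k) L']
    [Module k L] [Module k L']
    [IsScalarTower k (PowerSeries k) L] [IsScalarTower k (PowerSeries k) L']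
    [Module.Free (PowerSeries k) L] [Module.Finite (PowerSeries k) L]
    [Module.Free (PowerSeries k) L'] [Module.Finite (PowerSeries k) L']
    (φ : L →ₗ[PowerSeries k] L') (V : Submodule k L) (V' : Submodule k L')
    (N : ℕ) (hN : 0 < N)
    (hV : ∀ x : L, (X : PowerSeries k) ^ N • x ∈ V)
    (hV' : ∀ x : L', (X : PowerSeries k) ^ N • x ∈ V')
    (h : ∀ M : ℕ, N ≤ M →
      (φ '' (V : Set L)) + (Set.range fun l' : L' => (X : PowerSeries k) ^ M • l') =
        (V' : Set L')) :
    φ '' (V : Set L) = (V' : Set L') := by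
  set I : Ideal (PowerSeries k) := Ideal.span {(X : PowerSeries k)} with hI
  apply Set.Subset.antisymm
  · rw [← h N le_rfl]
    intro x hx
    exact ⟨x, hx, 0, ⟨0, smul_zero _⟩, add_zero x⟩
  · intro v' hv'
    -- decompose v' at every level
    have key : ∀ M : ℕ, ∃ v ∈ V, ∃ l : L',
        v' = φ v + (X : PowerSeries k) ^ (M + N) • l := by
      intro M
      have hv2 : v' ∈ (φ '' (V : Set L)) +
          (Set.range fun l' : L' => (X : PowerSeries k) ^ (M + N) • l') := by
        rw [h (M + N) (Nat.le_add_left N M)]; exact hv'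
      obtain ⟨a, ⟨v, hvV, rfl⟩, b, ⟨l, rfl⟩, hab⟩ := hv2
      exact ⟨v, hvV, l, hab.symm⟩
    set P : Submodule (PowerSeries k) L' := LinearMap.range φ with hPdef
    have hItop : I ≠ ⊤ := by
      rw [hI, Ne, Ideal.span_singleton_eq_top]
      intro hu
      rw [PowerSeries.isUnit_iff_constantCoeff] at hu
      simp at hu
    have hXmem : ∀ (M : ℕ) (Q : Type _) [AddCommGroup Q] [Module (PowerSeries k) Q]
        (q : Q), (X : PowerSeries k) ^ M • q ∈ (I ^ M • ⊤ : Submodule (PowerSeries k) Q) := by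
      intro M Q _ _ q
      rw [hI, Ideal.span_singleton_pow, Submodule.ideal_span_singleton_smul]
      exact Submodule.smul_mem_pointwise_smul q _ ⊤ trivial
    -- v' is in the range of φ, by Krull intersection
    have hP : v' ∈ P := by
      apply aux_krull_sep I hItop P v'
      intro i
      obtain ⟨v, hvV, l, hl⟩ := key i
      rw [hl]
      exact Submodule.add_mem_sup ⟨v, rfl⟩
        (Submodule.smul_mono_left (Ideal.pow_le_pow_right (Nat.le_add_right i N))
          (hXmem (i + N) _ _))
    obtain ⟨x, hx⟩ := hP
    -- Artin–Rees
    obtain ⟨c, hc⟩ := aux_artin_rees I P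
    obtain ⟨v, hvV, l, hl⟩ := key c
    have hmem : (X : PowerSeries k) ^ (c + N) • l ∈ (I ^ N • P : Submodule (PowerSeries k) L') := by
      have h1 : (X : PowerSeries k) ^ (c + N) • l ∈ ((I ^ (c + N) • ⊤ : Submodule (PowerSeries k) L') ⊓ P) := by
        refine ⟨hXmem (c + N) _ _, ?_⟩
        have : (X : PowerSeries k) ^ (c + N) • l = φ (x - v) := by
          rw [map_sub, hx, hl]; abel
        rw [this]; exact ⟨x - v, rfl⟩
      have h2 := hc (c + N) (Nat.le_add_right c N) h1
      have : c + N - c = N := by omega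
      rwa [this] at h2
    rw [hI, Ideal.span_singleton_pow, Submodule.ideal_span_singleton_smul,
      ← SetLike.mem_coe, Submodule.coe_pointwise_smul] at hmem
    obtain ⟨p, hp, hpeq⟩ := hmem
    obtain ⟨y, rfl⟩ := hp
    have hpeq' : (X : PowerSeries k) ^ N • φ y = (X : PowerSeries k) ^ (c + N) • l := hpeq
    refine ⟨v + (X : PowerSeries k) ^ N • y, V.add_mem hvV (hV y), ?_⟩
    rw [map_add, map_smul, hpeq', ← hl]
end

section
/- Let G be a finite group acting on a scheme X over a base scheme S. If X is separated over S, then the inclusion X^G → X of the fixed point functor is a closed immersion; in general it is a locally closed immersion (in particular X^G is representable by a scheme). -/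
/-!
The fixed locus of a single `S`-endomorphism `φ` of `X` is the equalizer of `φ` and `𝟙 X`, and
an equalizer of two maps agreeing over `S` is the pullback of the diagonal `X ⟶ X ×_S X`. The
diagonal is always an immersion, and a closed immersion exactly when `X` is separated over `S`,
so the same holds for the fixed locus. For a finite group the fixed locus is cut out by one such
equalizer per group element, and both kinds of immersion are stable under composition.
-/

open AlgebraicGeometry CategoryTheory CategoryTheory.Limits

namespace CategoryTheory.Limits

variable {C : Type*} [Category C]

lemma isPullback_equalizer_ι_diagonal {X Y S : C} (f g : X ⟶ Y) (t : Y ⟶ S)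
    (h : f ≫ t = g ≫ t) [HasEqualizer f g] [HasPullback t t] :
    IsPullback (equalizer.ι f g) (equalizer.ι f g ≫ f) (pullback.lift f g h)
      (pullback.diagonal t) := by
  refine ⟨⟨by ext <;> simp [equalizer.condition f g, pullback.lift_fst, pullback.lift_snd]⟩,
    ⟨PullbackCone.IsLimit.mk _ ?_ ?_ ?_ ?_⟩⟩
  · refine fun s ↦ equalizer.lift s.fst ?_
    have hf : s.fst ≫ f = s.snd := by
      simpa [pullback.lift_fst] using s.condition =≫ pullback.fst t t
    have hg : s.fst ≫ g = s.snd := by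
      simpa [pullback.lift_snd] using s.condition =≫ pullback.snd t t
    exact hf.trans hg.symm
  · exact fun s ↦ by simp
  · exact fun s ↦ by simpa [pullback.lift_fst] using s.condition =≫ pullback.fst t t
  · exact fun s m hm _ ↦ by ext; simp [*]

lemma exists_comp_equalizer_ι_comp_iff {F X T : C} (i : F ⟶ X) (φ : X ⟶ X)
    [HasEqualizer (i ≫ φ) i] (f : T ⟶ X) :
    (∃ h, h ≫ equalizer.ι (i ≫ φ) i ≫ i = f) ↔ (∃ h, h ≫ i = f) ∧ f ≫ φ = f := by
  constructor
  · rintro ⟨h, rfl⟩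
    exact ⟨⟨_, Category.assoc _ _ _⟩, by simp [equalizer.condition]⟩
  · rintro ⟨⟨h, rfl⟩, hf⟩
    exact ⟨equalizer.lift h (by simpa using hf), by simp⟩

lemma existsUnique_comp_eq_iff_exists {F X T : C} (i : F ⟶ X) [Mono i] (f : T ⟶ X) :
    (∃! h, h ≫ i = f) ↔ ∃ h, h ≫ i = f :=
  ⟨ExistsUnique.exists,
    fun ⟨h, hh⟩ ↦ ⟨h, hh, fun _ hh' ↦ cancel_mono i |>.1 (hh'.trans hh.symm)⟩⟩

variable [HasEqualizers C]

noncomputable def commonFixedLocus {X : C} : List (X ⟶ X) → Σ F : C, F ⟶ X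
  | [] => ⟨X, 𝟙 X⟩
  | φ :: l =>
    let i := (commonFixedLocus l).2
    ⟨_, equalizer.ι (i ≫ φ) i ≫ i⟩

lemma exists_comp_commonFixedLocus_iff {X T : C} (l : List (X ⟶ X)) (f : T ⟶ X) :
    (∃ h, h ≫ (commonFixedLocus l).2 = f) ↔ ∀ φ ∈ l, f ≫ φ = f := by
  induction l with
  | nil => exact ⟨fun _ _ h ↦ by simp at h, fun _ ↦ ⟨f, by simp [commonFixedLocus]⟩⟩
  | cons φ l ih =>
    rw [commonFixedLocus, exists_comp_equalizer_ι_comp_iff, ih, List.forall_mem_cons, and_comm]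

instance mono_commonFixedLocus {X : C} (l : List (X ⟶ X)) : Mono (commonFixedLocus l).2 := by
  induction l with
  | nil => exact inferInstanceAs (Mono (𝟙 X))
  | cons φ l ih => dsimp only [commonFixedLocus]; infer_instance

end CategoryTheory.Limits

namespace AlgebraicGeometry

lemma isClosedImmersion_equalizer_ι_of_comp_eq {X Y S : Scheme} (f g : X ⟶ Y) (t : Y ⟶ S)
    [IsSeparated t] (h : f ≫ t = g ≫ t) : IsClosedImmersion (equalizer.ι f g) :=
  MorphismProperty.of_isPullback (isPullback_equalizer_ι_diagonal f g t h).flip inferInstance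

instance isImmersion_commonFixedLocus {X : Scheme} (l : List (X ⟶ X)) :
    IsImmersion (commonFixedLocus l).2 := by
  induction l with
  | nil => exact inferInstanceAs (IsImmersion (𝟙 X))
  | cons φ l ih => dsimp only [commonFixedLocus]; infer_instance

lemma isClosedImmersion_commonFixedLocus {S X : Scheme} (πX : X ⟶ S) [IsSeparated πX]
    (l : List (X ⟶ X)) (hl : ∀ φ ∈ l, φ ≫ πX = πX) :
    IsClosedImmersion (commonFixedLocus l).2 := by
  induction l with
  | nil => exact inferInstanceAs (IsClosedImmersion (𝟙 X))
  | cons φ l ih =>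
    rw [List.forall_mem_cons] at hl
    have := ih hl.2
    have := isClosedImmersion_equalizer_ι_of_comp_eq ((commonFixedLocus l).2 ≫ φ)
      (commonFixedLocus l).2 πX (by simp [hl.1])
    dsimp only [commonFixedLocus]
    infer_instance

end AlgebraicGeometry

/-- Let `G` be a finite group acting on a scheme `X` over a base `S`.  Then the fixed-point
functor `T ↦ X(T)^G` is representable by a scheme `F` with a morphism `i : F ⟶ X` which is a
(locally closed) immersion; if moreover `X` is separated over `S`, then `i` is a closed
immersion. -/
theorem fixedPointScheme_exists_immersion {G : Type} [Group G] [Fintype G]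
    (S X : Scheme) (πX : X ⟶ S) (act : G →* Aut X)
    (hact : ∀ g : G, (act g).hom ≫ πX = πX) :
    ∃ (F : Scheme) (i : F ⟶ X),
      (∀ (T : Scheme) (f : T ⟶ X),
        (∀ g : G, f ≫ (act g).hom = f) ↔ ∃! h : T ⟶ F, h ≫ i = f) ∧
      IsImmersion i ∧
      (IsSeparated πX → IsClosedImmersion i) := by
  let l := Finset.univ.toList.map fun g ↦ (act g).hom
  have hl : ∀ φ ∈ l, φ ≫ πX = πX := by simpa [l] using hact
  refine ⟨(commonFixedLocus l).1, (commonFixedLocus l).2, fun T f ↦ ?_, inferInstance,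
    fun _ ↦ isClosedImmersion_commonFixedLocus πX l hl⟩
  rw [existsUnique_comp_eq_iff_exists, exists_comp_commonFixedLocus_iff]
  simp [l]
end
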